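/- Let V be a 4n-dimensional quaternion-Hermitian vector space and R an algebraic curvature tensor. The skew part of Ric^q(R) satisfies Σ_{A=I,J,K} A·(Ric^q)_a = -(Ric^q)_a, where (A·b)(x,y) = b(Ax, Ay). -/

import Mathlib

/-!
With `S_A(a, b) = Σᵢ R(a, eᵢ, b, A eᵢ)` and `ρ_A(a, b) = Σᵢ R(a, b, eᵢ, A eᵢ)`, the q-Ricci
tensor is `Ric^q(x, y) = Σ_A S_A(x, A y)`. Since `A` is skew-adjoint, pair symmetry makes `S_A`
skew, and the first Bianchi identity then gives `2 S_A = ρ_A`. Hence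
`4 (Ric^q)_a(u, v) = Σ_A (ρ_A(u, A v) + ρ_A(A u, v))`, and the quaternion relations make the
terms of `Σ_B 4 (Ric^q)_a(B x, B y)` with `B ≠ A` cancel in pairs, while those with `B = A` give
`-4 (Ric^q)_a(x, y)`.
-/

open scoped RealInnerProductSpace

namespace Quaternionic

variable {V : Type*} [AddCommGroup V] [Module ℝ V] {I J K : V →ₗ[ℝ] V}

lemma J_I (hK : ∀ x, K x = I (J x)) (hIJ : ∀ x, I (J x) = -J (I x)) (x : V) :
    J (I x) = -K x := by
  rw [hK, hIJ, neg_neg]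

lemma J_K (hJ2 : ∀ x, J (J x) = -x) (hK : ∀ x, K x = I (J x)) (hIJ : ∀ x, I (J x) = -J (I x))
    (x : V) : J (K x) = I x := by
  rw [hK, ← neg_neg (J (I (J x))), ← hIJ, hJ2, map_neg, neg_neg]

lemma K_K (hI2 : ∀ x, I (I x) = -x) (hJ2 : ∀ x, J (J x) = -x) (hK : ∀ x, K x = I (J x))
    (hIJ : ∀ x, I (J x) = -J (I x)) (x : V) : K (K x) = -x := by
  rw [hK (K x), J_K hJ2 hK hIJ, hI2]

lemma I_K (hI2 : ∀ x, I (I x) = -x) (hK : ∀ x, K x = I (J x)) (x : V) : I (K x) = -J x := by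
  rw [hK, hI2]

lemma K_I (hI2 : ∀ x, I (I x) = -x) (hK : ∀ x, K x = I (J x)) (hIJ : ∀ x, I (J x) = -J (I x))
    (x : V) : K (I x) = J x := by
  rw [hK, J_I hK hIJ, map_neg, I_K hI2 hK, neg_neg]

lemma K_J (hJ2 : ∀ x, J (J x) = -x) (hK : ∀ x, K x = I (J x)) (x : V) : K (J x) = -I x := by
  rw [hK, hJ2, map_neg]

def symmetrize (C : (V →ₗ[ℝ] V) → V → V → ℝ) (I J K : V →ₗ[ℝ] V) (u v : V) : ℝ :=
  C I u (I v) + C I (I u) v + C J u (J v) + C J (J u) v + C K u (K v) + C K (K u) v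

lemma symmetrize_sum_conj (C : (V →ₗ[ℝ] V) → V → V → ℝ)
    (hC_left : ∀ A a b, C A (-a) b = -C A a b) (hC_right : ∀ A a b, C A a (-b) = -C A a b)
    (hI2 : ∀ x, I (I x) = -x) (hJ2 : ∀ x, J (J x) = -x) (hK : ∀ x, K x = I (J x))
    (hIJ : ∀ x, I (J x) = -J (I x)) (x y : V) :
    symmetrize C I J K (I x) (I y) + symmetrize C I J K (J x) (J y) +
      symmetrize C I J K (K x) (K y) = -symmetrize C I J K x y := by
  simp only [symmetrize, hI2, hJ2, ← hK, J_I hK hIJ, J_K hJ2 hK hIJ, K_K hI2 hJ2 hK hIJ,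
    I_K hI2 hK, K_I hI2 hK hIJ, K_J hJ2 hK, hC_left, hC_right]
  ring

end Quaternionic

lemma inner_map_left_eq_neg_of_sq_eq_neg {V : Type*} [NormedAddCommGroup V]
    [InnerProductSpace ℝ V] {A : V →ₗ[ℝ] V} (hA2 : ∀ x, A (A x) = -x)
    (hAiso : ∀ x y, ⟪A x, A y⟫ = ⟪x, y⟫) (x y : V) : ⟪A x, y⟫ = -⟪x, A y⟫ := by
  rw [← hAiso, hA2, inner_neg_left]

lemma OrthonormalBasis.sum_map_left_eq_neg_sum_map_right {V ι : Type*} [NormedAddCommGroup V]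
    [InnerProductSpace ℝ V] [Fintype ι] (e : OrthonormalBasis ι ℝ V) (B : V →ₗ[ℝ] V →ₗ[ℝ] ℝ)
    {A : V →ₗ[ℝ] V} (hA : ∀ x y, ⟪A x, y⟫ = -⟪x, A y⟫) :
    ∑ i, B (A (e i)) (e i) = -∑ i, B (e i) (A (e i)) := by
  have expand_left (u w : V) : B u w = ∑ j, ⟪e j, u⟫ * B (e j) w := by
    conv_lhs => rw [← e.sum_repr' u]
    simp [map_sum, LinearMap.sum_apply, smul_eq_mul]
  have expand_right (u w : V) : B u w = ∑ j, ⟪e j, w⟫ * B u (e j) := by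
    conv_lhs => rw [← e.sum_repr' w]
    simp [map_sum, smul_eq_mul]
  calc ∑ i, B (A (e i)) (e i)
      = ∑ i, ∑ j, -(⟪e i, A (e j)⟫ * B (e j) (e i)) := by
        refine Finset.sum_congr rfl fun i _ => ?_
        rw [expand_left]
        refine Finset.sum_congr rfl fun j _ => ?_
        rw [real_inner_comm, hA, neg_mul]
    _ = -∑ j, ∑ i, ⟪e i, A (e j)⟫ * B (e j) (e i) := by
        rw [Finset.sum_comm]
        simp only [Finset.sum_neg_distrib]
    _ = -∑ j, B (e j) (A (e j)) := by
        simp only [← expand_right]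

section Contraction

variable {V ι : Type*} [NormedAddCommGroup V] [InnerProductSpace ℝ V] [Fintype ι]
  (e : OrthonormalBasis ι ℝ V) (R : V →ₗ[ℝ] V →ₗ[ℝ] V →ₗ[ℝ] V →ₗ[ℝ] ℝ) (A : V →ₗ[ℝ] V)

noncomputable def twistedRicci (a b : V) : ℝ :=
  ∑ i, R a (e i) b (A (e i))

/-- The contraction of `R` with the 2-form `⟪A ·, ·⟫`. -/
noncomputable def formContraction (a b : V) : ℝ :=
  ∑ i, R a b (e i) (A (e i))

lemma twistedRicci_swap (hpair : ∀ x y z u : V, R x y z u = R z u x y)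
    (hA : ∀ x y, ⟪A x, y⟫ = -⟪x, A y⟫) (a b : V) :
    twistedRicci e R A a b = -twistedRicci e R A b a := by
  unfold twistedRicci
  simp only [hpair a]
  exact e.sum_map_left_eq_neg_sum_map_right ((R b).flip a) hA

lemma twistedRicci_sub_swap (hskew : ∀ x y z u : V, R x y z u = -R y x z u)
    (hbianchi : ∀ x y z u : V, R x y z u + R y z x u + R z x y u = 0) (a b : V) :
    twistedRicci e R A a b - twistedRicci e R A b a = formContraction e R A a b := by
  unfold twistedRicci formContraction
  rw [← Finset.sum_sub_distrib]
  refine Finset.sum_congr rfl fun i _ => ?_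
  linarith [hbianchi a (e i) b (A (e i)), hskew (e i) b a (A (e i)), hskew b a (e i) (A (e i))]

lemma two_mul_twistedRicci (hskew : ∀ x y z u : V, R x y z u = -R y x z u)
    (hpair : ∀ x y z u : V, R x y z u = R z u x y)
    (hbianchi : ∀ x y z u : V, R x y z u + R y z x u + R z x y u = 0)
    (hA : ∀ x y, ⟪A x, y⟫ = -⟪x, A y⟫) (a b : V) :
    2 * twistedRicci e R A a b = formContraction e R A a b := by
  linarith [twistedRicci_swap e R A hpair hA a b, twistedRicci_sub_swap e R A hskew hbianchi a b]

lemma formContraction_swap (hskew : ∀ x y z u : V, R x y z u = -R y x z u) (a b : V) :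
    formContraction e R A a b = -formContraction e R A b a := by
  simp only [formContraction, ← Finset.sum_neg_distrib, hskew a b]

lemma formContraction_neg_left (a b : V) :
    formContraction e R A (-a) b = -formContraction e R A a b := by
  unfold formContraction
  -- `map_neg` does not apply: no `Neg` instance is found on the iterated space of linear maps
  rw [← neg_one_smul ℝ a, map_smul]
  simp

lemma formContraction_neg_right (a b : V) :
    formContraction e R A a (-b) = -formContraction e R A a b := by
  simp [formContraction]

end Contraction

theorem stmt10_general (V : Type*) [NormedAddCommGroup V] [InnerProductSpace ℝ V]
    (ι : Type*) [Fintype ι] (e : OrthonormalBasis ι ℝ V)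
    (I J K : V →ₗ[ℝ] V)
    (hI2 : ∀ x : V, I (I x) = -x) (hJ2 : ∀ x : V, J (J x) = -x)
    (hK : ∀ x : V, K x = I (J x)) (hIJ : ∀ x : V, I (J x) = -J (I x))
    (hIiso : ∀ x y : V, ⟪I x, I y⟫ = ⟪x, y⟫)
    (hJiso : ∀ x y : V, ⟪J x, J y⟫ = ⟪x, y⟫)
    (hKiso : ∀ x y : V, ⟪K x, K y⟫ = ⟪x, y⟫)
    (R : V →ₗ[ℝ] V →ₗ[ℝ] V →ₗ[ℝ] V →ₗ[ℝ] ℝ)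
    (hskew1 : ∀ x y z u : V, R x y z u = -R y x z u)
    (hpair : ∀ x y z u : V, R x y z u = R z u x y)
    (hbianchi : ∀ x y z u : V, R x y z u + R y z x u + R z x y u = 0)
    (Ricq : V → V → ℝ)
    (hRicq : ∀ x y : V, Ricq x y =
      ∑ i, (R x (e i) (I y) (I (e i)) + R x (e i) (J y) (J (e i)) +
            R x (e i) (K y) (K (e i))))
    (Ricqa : V → V → ℝ)
    (hRicqa : ∀ x y : V, Ricqa x y = (1 / 2 : ℝ) * (Ricq x y - Ricq y x)) :
    ∀ x y : V, Ricqa (I x) (I y) + Ricqa (J x) (J y) + Ricqa (K x) (K y)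
      = -Ricqa x y := by
  have two_mul_twisted (A : V →ₗ[ℝ] V) (hA2 : ∀ x, A (A x) = -x)
      (hAiso : ∀ x y, ⟪A x, A y⟫ = ⟪x, y⟫) (a b : V) :=
    two_mul_twistedRicci e R A hskew1 hpair hbianchi
      (inner_map_left_eq_neg_of_sq_eq_neg hA2 hAiso) a b
  have two_mul_Ricq (x y : V) : 2 * Ricq x y = formContraction e R I x (I y) +
      formContraction e R J x (J y) + formContraction e R K x (K y) := by
    rw [hRicq, Finset.sum_add_distrib, Finset.sum_add_distrib, ← two_mul_twisted I hI2 hIiso,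
      ← two_mul_twisted J hJ2 hJiso, ← two_mul_twisted K (Quaternionic.K_K hI2 hJ2 hK hIJ) hKiso]
    simp only [twistedRicci]
    ring
  have four_mul_Ricqa (u v : V) :
      4 * Ricqa u v = Quaternionic.symmetrize (formContraction e R) I J K u v := by
    rw [hRicqa, Quaternionic.symmetrize, formContraction_swap e R I hskew1 (I u),
      formContraction_swap e R J hskew1 (J u), formContraction_swap e R K hskew1 (K u)]
    linarith [two_mul_Ricq u v, two_mul_Ricq v u]
  intro x y
  linarith [four_mul_Ricqa x y, four_mul_Ricqa (I x) (I y), four_mul_Ricqa (J x) (J y),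
    four_mul_Ricqa (K x) (K y), Quaternionic.symmetrize_sum_conj (formContraction e R)
      (formContraction_neg_left e R) (formContraction_neg_right e R) hI2 hJ2 hK hIJ x y]

/-- the skew-symmetric part of the q-Ricci tensor satisfies
`Σ_{A=I,J,K} A · (Ric^q)_a = -(Ric^q)_a`, where `(A·b)(x,y) = b(Ax, Ay)`. -/
theorem stmt10 (n : ℕ) (V : Type*) [NormedAddCommGroup V] [InnerProductSpace ℝ V]
    [FiniteDimensional ℝ V] (hdim : Module.finrank ℝ V = 4 * n)
    (ι : Type*) [Fintype ι] (e : OrthonormalBasis ι ℝ V)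
    (I J K : V →ₗ[ℝ] V)
    (hI2 : ∀ x : V, I (I x) = -x) (hJ2 : ∀ x : V, J (J x) = -x)
    (hK : ∀ x : V, K x = I (J x)) (hIJ : ∀ x : V, I (J x) = -J (I x))
    (hIiso : ∀ x y : V, ⟪I x, I y⟫ = ⟪x, y⟫)
    (hJiso : ∀ x y : V, ⟪J x, J y⟫ = ⟪x, y⟫)
    (hKiso : ∀ x y : V, ⟪K x, K y⟫ = ⟪x, y⟫)
    (R : V →ₗ[ℝ] V →ₗ[ℝ] V →ₗ[ℝ] V →ₗ[ℝ] ℝ)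
    (hskew1 : ∀ x y z u : V, R x y z u = -R y x z u)
    (hskew2 : ∀ x y z u : V, R x y z u = -R x y u z)
    (hpair : ∀ x y z u : V, R x y z u = R z u x y)
    (hbianchi : ∀ x y z u : V, R x y z u + R y z x u + R z x y u = 0)
    (Ricq : V → V → ℝ)
    (hRicq : ∀ x y : V, Ricq x y =
      ∑ i, (R x (e i) (I y) (I (e i)) + R x (e i) (J y) (J (e i)) +
            R x (e i) (K y) (K (e i))))
    (Ricqa : V → V → ℝ)
    (hRicqa : ∀ x y : V, Ricqa x y = (1 / 2 : ℝ) * (Ricq x y - Ricq y x)) :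
    ∀ x y : V, Ricqa (I x) (I y) + Ricqa (J x) (J y) + Ricqa (K x) (K y)
      = -Ricqa x y :=
  stmt10_general V ι e I J K hI2 hJ2 hK hIJ hIiso hJiso hKiso R hskew1 hpair hbianchi Ricq hRicq
    Ricqa hRicqa
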